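/- For an A-bounded operator T and q ∈ ℂ with 0 < |q| ≤ 1, one has ω_{A,q}(T) + ω_{A,q̄}(T) ≤ 2ω_A(T) + 2√2 · √(1 − Re q) · ‖T‖_A. -/

import Mathlib

noncomputable def innA {H : Type*} [NormedAddCommGroup H] [InnerProductSpace ℂ H]
    (A : H →L[ℂ] H) (x y : H) : ℂ := inner ℂ (A x) y

noncomputable def snA {H : Type*} [NormedAddCommGroup H] [InnerProductSpace ℂ H]
    (A : H →L[ℂ] H) (x : H) : ℝ := Real.sqrt (innA A x x).re

noncomputable def opNormA {H : Type*} [NormedAddCommGroup H] [InnerProductSpace ℂ H]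
    (A T : H →L[ℂ] H) : ℝ := sSup {r : ℝ | ∃ x : H, snA A x = 1 ∧ r = snA A (T x)}

def ABounded {H : Type*} [NormedAddCommGroup H] [InnerProductSpace ℂ H]
    (A T : H →L[ℂ] H) : Prop := ∃ c > 0, ∀ x : H, snA A (T x) ≤ c * snA A x

noncomputable def wAq {H : Type*} [NormedAddCommGroup H] [InnerProductSpace ℂ H]
    (A T : H →L[ℂ] H) (q : ℂ) : ℝ :=
  sSup {r : ℝ | ∃ x y : H, snA A x = 1 ∧ snA A y = 1 ∧ innA A x y = q ∧
    r = ‖innA A (T x) y‖}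

noncomputable def cAq {H : Type*} [NormedAddCommGroup H] [InnerProductSpace ℂ H]
    (A T : H →L[ℂ] H) (q : ℂ) : ℝ :=
  sInf {r : ℝ | ∃ x y : H, snA A x = 1 ∧ snA A y = 1 ∧ innA A x y = q ∧
    r = ‖innA A (T x) y‖}

noncomputable def wA {H : Type*} [NormedAddCommGroup H] [InnerProductSpace ℂ H]
    (A T : H →L[ℂ] H) : ℝ :=
  sSup {r : ℝ | ∃ x : H, snA A x = 1 ∧ r = ‖innA A (T x) x‖}

noncomputable def cA {H : Type*} [NormedAddCommGroup H] [InnerProductSpace ℂ H]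
    (A T : H →L[ℂ] H) : ℝ :=
  sInf {r : ℝ | ∃ x : H, snA A x = 1 ∧ r = ‖innA A (T x) x‖}

def WAq {H : Type*} [NormedAddCommGroup H] [InnerProductSpace ℂ H]
    (A T : H →L[ℂ] H) (q : ℂ) : Set ℂ :=
  {r : ℂ | ∃ x y : H, snA A x = 1 ∧ snA A y = 1 ∧ innA A x y = q ∧ r = innA A (T x) y}


/-!
For `A`-unit vectors `x`, `y` with `⟪x, y⟫_A = q`, split
`⟪T x, y⟫_A = ⟪T x, x⟫_A + ⟪T x, y - x⟫_A`. The first term is at most `ω_A(T)`; by the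
Cauchy–Schwarz inequality for the semi-inner product `⟪·, ·⟫_A`, the second is at most
`‖T‖_A ‖y - x‖_A`, and `‖y - x‖_A ^ 2 = 2 - 2 Re q`. Hence
`ω_{A,q}(T) ≤ ω_A(T) + √2 √(1 - Re q) ‖T‖_A`; adding this for `q` and `q̄` gives the claim.
-/

open ComplexConjugate

section

variable {H : Type*} [NormedAddCommGroup H] [InnerProductSpace ℂ H] {A T : H →L[ℂ] H}

theorem re_innA_sub_self (x y : H) :
    (innA A (y - x) (y - x)).re =
      (innA A y y).re + (innA A x x).re - (innA A x y).re - (innA A y x).re := by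
  simp only [innA, map_sub, inner_sub_left, inner_sub_right, Complex.sub_re]
  ring

theorem re_innA_self_eq_one {x : H} (hx : snA A x = 1) : (innA A x x).re = 1 :=
  Real.sqrt_eq_one.mp hx

namespace ContinuousLinearMap.IsPositive

theorem conj_innA (hA : A.IsPositive) (x y : H) : conj (innA A x y) = innA A y x := by
  rw [innA, innA, inner_conj_symm, hA.inner_left_eq_inner_right]

-- The norm of this core, `√(re ⟪x, x⟫_A)`, is `snA A` by definition.
noncomputable abbrev innACore (hA : A.IsPositive) : PreInnerProductSpace.Core ℂ H where
  inner := innA A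
  conj_inner_symm x y := hA.conj_innA y x
  re_inner_nonneg := hA.re_inner_nonneg_left
  add_left x y z := by simp only [innA, map_add, inner_add_left]
  smul_left x y r := by simp only [innA, map_smul, inner_smul_left]

theorem norm_innA_le (hA : A.IsPositive) (x y : H) : ‖innA A x y‖ ≤ snA A x * snA A y :=
  @InnerProductSpace.Core.norm_inner_le_norm ℂ H _ _ _ hA.innACore x y

theorem snA_sub_of_innA_eq (hA : A.IsPositive) {x y : H} {q : ℂ} (hx : snA A x = 1)
    (hy : snA A y = 1) (hxy : innA A x y = q) :
    snA A (y - x) = Real.sqrt 2 * Real.sqrt (1 - q.re) := by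
  have hre : (innA A (y - x) (y - x)).re = 2 * (1 - q.re) := by
    rw [re_innA_sub_self, ← hA.conj_innA x y, Complex.conj_re, hxy, re_innA_self_eq_one hx,
      re_innA_self_eq_one hy]
    ring
  rw [snA, hre, Real.sqrt_mul zero_le_two]

theorem norm_innA_apply_self_le_wA (hA : A.IsPositive) (hT : ABounded A T) {x : H}
    (hx : snA A x = 1) : ‖innA A (T x) x‖ ≤ wA A T := by
  obtain ⟨c, -, hc⟩ := hT
  refine le_csSup ⟨c, ?_⟩ ⟨x, hx, rfl⟩
  rintro r ⟨z, hz, rfl⟩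
  calc ‖innA A (T z) z‖ ≤ snA A (T z) * snA A z := hA.norm_innA_le _ _
    _ ≤ c * snA A z * snA A z := by gcongr; exact hc z
    _ = c := by rw [hz, mul_one, mul_one]

end ContinuousLinearMap.IsPositive

theorem snA_apply_le_opNormA (hT : ABounded A T) {x : H} (hx : snA A x = 1) :
    snA A (T x) ≤ opNormA A T := by
  obtain ⟨c, -, hc⟩ := hT
  refine le_csSup ⟨c, ?_⟩ ⟨x, hx, rfl⟩
  rintro r ⟨z, hz, rfl⟩
  simpa [hz] using hc z

theorem wA_nonneg (A T : H →L[ℂ] H) : 0 ≤ wA A T :=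
  Real.sSup_nonneg fun _ ⟨_, _, hr⟩ ↦ hr ▸ norm_nonneg _

theorem opNormA_nonneg (A T : H →L[ℂ] H) : 0 ≤ opNormA A T :=
  Real.sSup_nonneg fun _ ⟨_, _, hr⟩ ↦ hr ▸ Real.sqrt_nonneg _

theorem ContinuousLinearMap.IsPositive.wAq_le (hA : A.IsPositive) (hT : ABounded A T) (q : ℂ) :
    wAq A T q ≤ wA A T + Real.sqrt 2 * Real.sqrt (1 - q.re) * opNormA A T := by
  refine Real.sSup_le ?_ (by have := wA_nonneg A T; have := opNormA_nonneg A T; positivity)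
  rintro r ⟨x, y, hx, hy, hxy, rfl⟩
  have hsplit : innA A (T x) y = innA A (T x) x + innA A (T x) (y - x) := by
    simp only [innA, inner_sub_right, add_sub_cancel]
  calc ‖innA A (T x) y‖ ≤ ‖innA A (T x) x‖ + ‖innA A (T x) (y - x)‖ :=
        hsplit ▸ norm_add_le _ _
    _ ≤ wA A T + snA A (T x) * snA A (y - x) :=
        add_le_add (hA.norm_innA_apply_self_le_wA hT hx) (hA.norm_innA_le _ _)
    _ ≤ wA A T + opNormA A T * snA A (y - x) := by
        gcongr
        · exact Real.sqrt_nonneg _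
        · exact snA_apply_le_opNormA hT hx
    _ = wA A T + Real.sqrt 2 * Real.sqrt (1 - q.re) * opNormA A T := by
        rw [hA.snA_sub_of_innA_eq hx hy hxy]; ring

end

theorem stmt8_general {H : Type*} [NormedAddCommGroup H] [InnerProductSpace ℂ H]
    (A T : H →L[ℂ] H) (hA : A.IsPositive) (hT : ABounded A T)
    (q : ℂ) :
    wAq A T q + wAq A T ((starRingEnd ℂ) q) ≤
      2 * wA A T + 2 * Real.sqrt 2 * Real.sqrt (1 - q.re) * opNormA A T := by
  have hq := hA.wAq_le hT q
  have hq_conj := hA.wAq_le hT (conj q)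
  rw [Complex.conj_re] at hq_conj
  linarith

theorem stmt8 {H : Type*} [NormedAddCommGroup H] [InnerProductSpace ℂ H] [CompleteSpace H]
    (A T : H →L[ℂ] H) (hA : A.IsPositive) (hA0 : A ≠ 0) (hT : ABounded A T)
    (q : ℂ) (hq0 : 0 < ‖q‖) (hq1 : ‖q‖ ≤ 1) :
    wAq A T q + wAq A T ((starRingEnd ℂ) q) ≤
      2 * wA A T + 2 * Real.sqrt 2 * Real.sqrt (1 - q.re) * opNormA A T :=
  stmt8_general A T hA hT q
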